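/- arXiv:1912.01945 — 2 statements merged into one kernel-verified Lean document; each statement's English description precedes it below -/
import Mathlib

section
/- Let (X, μ) be a finite measure space, let g : ℝ → ℝ be continuous, nondecreasing, and satisfy s·g(s) ≥ 0 for all s ∈ ℝ, and let u : X → ℝ be measurable. For N ∈ ℕ let u_N := max(−N, min(N, u)) denote the truncation of u at level N. Let K ≥ 0 and assume that for every N ∈ ℕ the product g(u)·g(u_N) is μ-integrable and ∫_X g(u) g(u_N) dμ ≤ K (∫_X g(u_N)² dμ)^{1/2}. Then g(u) ∈ L²(μ) and ‖g(u)‖_{L²(μ)} ≤ K. -/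
/-!
Pointwise, the truncation `u_N` lies between `0` and `u`, so monotonicity and the sign condition
give `g(u_N)² ≤ g(u) g(u_N)`. Integrating, `I_N := ∫ g(u_N)²` satisfies `I_N ≤ K √I_N`, i.e.
`‖g(u_N)‖₂ ≤ K`. Since `u_N = u` as soon as `N ≥ |u|`, Fatou's lemma for the `L²` norm passes
the bound to `g(u)`. Only levels `N ≥ 1` are used: at level `0` the truncation is `0`, where a
discontinuous `g` need not vanish.
-/

open MeasureTheory Filter

theorem ENNReal.ofReal_sqrt_le_of_le_mul_sqrt {I K : ℝ} (h : I ≤ K * √I) :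
    ENNReal.ofReal √I ≤ ENNReal.ofReal K := by
  rcases (Real.sqrt_nonneg I).eq_or_lt with hI | hI
  · simp [← hI]
  · refine ENNReal.ofReal_le_ofReal (le_of_mul_le_mul_right ?_ hI)
    rwa [Real.mul_self_sqrt (Real.sqrt_pos.mp hI).le]

theorem MeasureTheory.MemLp.eLpNorm_two_eq_ofReal_sqrt {X : Type*} [MeasurableSpace X]
    {μ : Measure X} {f : X → ℝ} (hf : MemLp f 2 μ) :
    eLpNorm f 2 μ = ENNReal.ofReal √(∫ x, f x ^ 2 ∂μ) := by
  rw [hf.eLpNorm_eq_integral_rpow_norm two_ne_zero ENNReal.ofNat_ne_top, Real.sqrt_eq_rpow]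
  simp [Real.norm_eq_abs, one_div]

def truncAt (N a : ℝ) : ℝ := max (-N) (min N a)

theorem truncAt_eventually_eq (a : ℝ) : ∀ᶠ N : ℕ in atTop, truncAt N a = a := by
  filter_upwards [eventually_ge_atTop ⌈|a|⌉₊] with N hN
  have hN : |a| ≤ N := (Nat.le_ceil _).trans (by exact_mod_cast hN)
  rw [abs_le] at hN
  simp [truncAt, hN.1, hN.2]

theorem sq_apply_truncAt_le {g : ℝ → ℝ} (hgm : Monotone g) (hgs : ∀ s, 0 ≤ s * g s)
    {N : ℝ} (hN : 0 < N) (a : ℝ) : g (truncAt N a) ^ 2 ≤ g a * g (truncAt N a) := by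
  rcases lt_trichotomy a 0 with ha | rfl | ha
  · have hc : truncAt N a = max (-N) a := by rw [truncAt, min_eq_right (ha.trans hN).le]
    have hneg : g (max (-N) a) ≤ 0 :=
      nonpos_of_mul_nonneg_right (hgs _) (max_lt (by linarith) ha)
    have hmono : g a ≤ g (max (-N) a) := hgm (le_max_right _ _)
    rw [hc]
    nlinarith
  · simp [truncAt, hN.le, sq]
  · have hc : truncAt N a = min N a := max_eq_right (by linarith [lt_min hN ha])
    have hpos : 0 ≤ g (min N a) := nonneg_of_mul_nonneg_right (hgs _) (lt_min hN ha)
    have hmono : g (min N a) ≤ g a := hgm (min_le_right _ _)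
    rw [hc]
    nlinarith

theorem eLpNorm_two_le_of_sq_le_mul {X : Type*} [MeasurableSpace X] {μ : Measure X}
    {f h : X → ℝ} {K : ℝ} (hf : AEStronglyMeasurable f μ)
    (hhf : Integrable (fun x => h x * f x) μ)
    (hsq : ∀ᵐ x ∂μ, f x ^ 2 ≤ h x * f x)
    (hK : ∫ x, h x * f x ∂μ ≤ K * √(∫ x, f x ^ 2 ∂μ)) :
    eLpNorm f 2 μ ≤ ENNReal.ofReal K := by
  have hsq_int : Integrable (fun x => f x ^ 2) μ :=
    hhf.mono' (hf.pow 2) (by filter_upwards [hsq] with x hx; simpa using hx)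
  rw [((memLp_two_iff_integrable_sq hf).mpr hsq_int).eLpNorm_two_eq_ofReal_sqrt]
  exact ENNReal.ofReal_sqrt_le_of_le_mul_sqrt ((integral_mono_ae hsq_int hhf hsq).trans hK)

theorem stmt12_general {X : Type*} [MeasurableSpace X] (μ : Measure X)
    (g : ℝ → ℝ) (hgm : Monotone g) (hgs : ∀ s : ℝ, 0 ≤ s * g s)
    (u : X → ℝ) (hu : Measurable u) (K : ℝ)
    (hint : ∀ N : ℕ, Integrable
      (fun x => g (u x) * g (max (-(N : ℝ)) (min (N : ℝ) (u x)))) μ)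
    (hbd : ∀ N : ℕ,
      ∫ x, g (u x) * g (max (-(N : ℝ)) (min (N : ℝ) (u x))) ∂μ ≤
        K * Real.sqrt (∫ x, (g (max (-(N : ℝ)) (min (N : ℝ) (u x)))) ^ 2 ∂μ)) :
    MemLp (fun x => g (u x)) 2 μ ∧
      eLpNorm (fun x => g (u x)) 2 μ ≤ ENNReal.ofReal K := by
  have hmeas (N : ℕ) : AEStronglyMeasurable (fun x => g (truncAt N (u x))) μ :=
    (hgm.measurable.comp (measurable_const.max (measurable_const.min hu))).aestronglyMeasurable
  have htrunc : ∀ᶠ N : ℕ in atTop,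
      eLpNorm (fun x => g (truncAt N (u x))) 2 μ ≤ ENNReal.ofReal K := by
    filter_upwards [eventually_gt_atTop 0] with N hN
    exact eLpNorm_two_le_of_sq_le_mul (hmeas N) (hint N)
      (ae_of_all _ fun x => sq_apply_truncAt_le hgm hgs (Nat.cast_pos.mpr hN) (u x)) (hbd N)
  have hlim : eLpNorm (fun x => g (u x)) 2 μ ≤ ENNReal.ofReal K :=
    Lp.eLpNorm_le_of_ae_tendsto htrunc hmeas <| ae_of_all _ fun x =>
      tendsto_const_nhds.congr' <|
        (truncAt_eventually_eq (u x)).mono fun N hN => congrArg g hN.symm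
  exact ⟨⟨(hgm.measurable.comp hu).aestronglyMeasurable, hlim.trans_lt ENNReal.ofReal_lt_top⟩,
    hlim⟩

/-- An `L²` bound for `g(u)` obtained from uniform bounds against truncations: if `g` is
continuous, nondecreasing, with `s·g(s) ≥ 0`, and for every truncation level `N` the
product `g(u)·g(u_N)` is integrable with
`∫ g(u) g(u_N) dμ ≤ K (∫ g(u_N)² dμ)^{1/2}` where `u_N = max(−N, min(N, u))`,
then `g(u) ∈ L²(μ)` and `‖g(u)‖_{L²(μ)} ≤ K`. -/
theorem stmt12 {X : Type*} [MeasurableSpace X] (μ : Measure X) [IsFiniteMeasure μ]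
    (g : ℝ → ℝ) (hgc : Continuous g) (hgm : Monotone g) (hgs : ∀ s : ℝ, 0 ≤ s * g s)
    (u : X → ℝ) (hu : Measurable u) (K : ℝ) (hK : 0 ≤ K)
    (hint : ∀ N : ℕ, Integrable
      (fun x => g (u x) * g (max (-(N : ℝ)) (min (N : ℝ) (u x)))) μ)
    (hbd : ∀ N : ℕ,
      ∫ x, g (u x) * g (max (-(N : ℝ)) (min (N : ℝ) (u x))) ∂μ ≤
        K * Real.sqrt (∫ x, (g (max (-(N : ℝ)) (min (N : ℝ) (u x)))) ^ 2 ∂μ)) :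
    MemLp (fun x => g (u x)) 2 μ ∧
      eLpNorm (fun x => g (u x)) 2 μ ≤ ENNReal.ofReal K :=
  stmt12_general μ g hgm hgs u hu K hint hbd
end

section
/- Let H be a real Hilbert space, let B : H → H be a continuous linear map that is self-adjoint (⟨B v, w⟩ = ⟨v, B w⟩ for all v, w) and positive semidefinite (⟨B v, v⟩ ≥ 0 for all v). Let f : ℝ → H be strongly measurable with t ↦ ‖f(t)‖² locally integrable, and let h > 0 and s > 0. Then ∫₀^s ⟨B f(t), f(t) − f(t−h)⟩ dt ≥ ½ ∫_{s−h}^{s} ⟨B f(t), f(t)⟩ dt − ½ ∫_{−h}^{0} ⟨B f(t), f(t)⟩ dt. -/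
/-!
For a positive operator `T`,
`⟪T a, a - b⟫ = ½ ⟪T a, a⟫ - ½ ⟪T b, b⟫ + ½ ⟪T (a - b), a - b⟫ ≥ ½ ⟪T a, a⟫ - ½ ⟪T b, b⟫`.
Take `a = f t`, `b = f (t - h)` and integrate over `(0, s)`: after the change of variables
`t ↦ t - h` the right side telescopes to the boundary integrals over `(s - h, s)` and `(-h, 0)`.
Integrability comes from `|⟪B u, v⟫| ≤ ‖B‖ (‖u‖² + ‖v‖²)`.
-/

open MeasureTheory
open scoped RealInnerProductSpace

theorem LinearMap.IsPositive.half_sub_le_inner_sub {E : Type*} [NormedAddCommGroup E]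
    [InnerProductSpace ℝ E] {T : E →ₗ[ℝ] E} (hT : T.IsPositive) (a b : E) :
    1 / 2 * (⟪T a, a⟫ - ⟪T b, b⟫) ≤ ⟪T a, a - b⟫ := by
  have hsymm : ⟪T b, a⟫ = ⟪T a, b⟫ := by rw [hT.isSymmetric b a, real_inner_comm]
  have hexpand : ⟪T (a - b), a - b⟫ = ⟪T a, a⟫ - 2 * ⟪T a, b⟫ + ⟪T b, b⟫ := by
    simp only [map_sub, inner_sub_left, inner_sub_right, hsymm]
    ring
  have hnonneg := hT.inner_nonneg_left (a - b)
  rw [inner_sub_right]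
  linarith

theorem MeasureTheory.LocallyIntegrable.inner_clm_apply {X H : Type*} [TopologicalSpace X]
    [MeasurableSpace X] {μ : Measure X} [NormedAddCommGroup H] [InnerProductSpace ℝ H]
    (B : H →L[ℝ] H) {u v : X → H} (hu : AEStronglyMeasurable u μ)
    (hv : AEStronglyMeasurable v μ) (hu2 : LocallyIntegrable (fun x => ‖u x‖ ^ 2) μ)
    (hv2 : LocallyIntegrable (fun x => ‖v x‖ ^ 2) μ) :
    LocallyIntegrable (fun x => ⟪B (u x), v x⟫) μ := by
  refine ((hu2.add hv2).smul ‖B‖).mono ((B.continuous.comp_aestronglyMeasurable hu).inner hv)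
    (Filter.Eventually.of_forall fun x => ?_)
  have hcs : ‖⟪B (u x), v x⟫‖ ≤ ‖B‖ * (‖u x‖ * ‖v x‖) :=
    (norm_inner_le_norm _ _).trans (by
      rw [← mul_assoc]; exact mul_le_mul_of_nonneg_right (B.le_opNorm _) (norm_nonneg _))
  have hamgm : ‖u x‖ * ‖v x‖ ≤ ‖u x‖ ^ 2 + ‖v x‖ ^ 2 := by
    nlinarith [sq_nonneg (‖u x‖ - ‖v x‖), norm_nonneg (u x), norm_nonneg (v x)]
  have hbound : 0 ≤ ‖B‖ * (‖u x‖ ^ 2 + ‖v x‖ ^ 2) := by positivity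
  rw [Pi.smul_apply, Pi.add_apply, smul_eq_mul, Real.norm_of_nonneg hbound]
  exact hcs.trans (mul_le_mul_of_nonneg_left hamgm (norm_nonneg _))

theorem MeasureTheory.LocallyIntegrable.comp_sub_right {E : Type*} [NormedAddCommGroup E]
    {g : ℝ → E} (hg : LocallyIntegrable g) (c : ℝ) : LocallyIntegrable (fun t => g (t - c)) := by
  have := (locallyIntegrable_map_homeomorph (μ := volume) (Homeomorph.subRight c) (f := g)).1
  exact this (by rwa [Homeomorph.coe_subRight, map_sub_right_eq_self])

theorem MeasureTheory.LocallyIntegrable.intervalIntegrable {E : Type*} [NormedAddCommGroup E]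
    {μ : Measure ℝ} {g : ℝ → E} (hg : LocallyIntegrable g μ) (a b : ℝ) :
    IntervalIntegrable g μ a b :=
  (hg.integrableOn_isCompact isCompact_uIcc).intervalIntegrable

theorem intervalIntegral.integral_sub_comp_sub_right {E : Type*} [NormedAddCommGroup E]
    [NormedSpace ℝ E] {g : ℝ → E} (hg : LocallyIntegrable g) (a b c : ℝ) :
    ∫ t in a..b, (g t - g (t - c)) = (∫ t in (b - c)..b, g t) - ∫ t in (a - c)..a, g t := by
  rw [integral_sub (hg.intervalIntegrable a b) ((hg.comp_sub_right c).intervalIntegrable a b),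
    integral_comp_sub_right, integral_interval_sub_interval_comm' (hg.intervalIntegrable _ _)
      (hg.intervalIntegrable _ _) (hg.intervalIntegrable _ _)]

theorem stmt13_general {H : Type*} [NormedAddCommGroup H] [InnerProductSpace ℝ H]
    (B : H →L[ℝ] H)
    (hsa : ∀ x y : H, (inner ℝ (B x) y : ℝ) = (inner ℝ x (B y) : ℝ))
    (hpos : ∀ x : H, 0 ≤ (inner ℝ (B x) x : ℝ))
    (f : ℝ → H) (hf : StronglyMeasurable f)
    (hloc : LocallyIntegrable (fun t : ℝ => ‖f t‖ ^ 2) volume)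
    (h s : ℝ) (hs : 0 < s) :
    (1 / 2 : ℝ) * (∫ t in (s - h)..s, (inner ℝ (B (f t)) (f t) : ℝ)) -
        (1 / 2 : ℝ) * (∫ t in (-h)..(0 : ℝ), (inner ℝ (B (f t)) (f t) : ℝ)) ≤
      ∫ t in (0 : ℝ)..s, (inner ℝ (B (f t)) (f t - f (t - h)) : ℝ) := by
  have hB : (B : H →ₗ[ℝ] H).IsPositive := (LinearMap.isPositive_iff _).2 ⟨hsa, hpos⟩
  have hf' : AEStronglyMeasurable f := hf.aestronglyMeasurable
  have hfh : AEStronglyMeasurable fun t => f (t - h) :=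
    (hf.comp_measurable (measurable_sub_const h)).aestronglyMeasurable
  set q : ℝ → ℝ := fun t => ⟪B (f t), f t⟫
  have hq : LocallyIntegrable q := hloc.inner_clm_apply B hf' hf' hloc
  have hcross : LocallyIntegrable fun t => ⟪B (f t), f (t - h)⟫ :=
    hloc.inner_clm_apply B hf' hfh (hloc.comp_sub_right h)
  have hrhs : IntervalIntegrable (fun t => ⟪B (f t), f t - f (t - h)⟫) volume 0 s := by
    simp only [inner_sub_right]
    exact (hq.sub hcross).intervalIntegrable 0 s
  calc 1 / 2 * (∫ t in (s - h)..s, q t) - 1 / 2 * ∫ t in (-h)..0, q t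
      = ∫ t in 0..s, 1 / 2 * (q t - q (t - h)) := by
        rw [intervalIntegral.integral_const_mul, intervalIntegral.integral_sub_comp_sub_right hq,
          zero_sub, mul_sub]
    _ ≤ _ := intervalIntegral.integral_mono_on hs.le
        (((hq.sub (hq.comp_sub_right h)).intervalIntegrable 0 s).const_mul _) hrhs
        fun t _ => hB.half_sub_le_inner_sub (f t) (f (t - h))

/-- The telescoping inequality for difference quotients: for a self-adjoint positive
semidefinite continuous linear map `B` on a real Hilbert space and `f : ℝ → H` strongly
measurable with `‖f‖²` locally integrable, for all `h > 0`, `s > 0`,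
`∫₀^s ⟨B f(t), f(t) − f(t−h)⟩ dt ≥ ½ ∫_{s−h}^s ⟨B f, f⟩ dt − ½ ∫_{−h}^0 ⟨B f, f⟩ dt`. -/
theorem stmt13 {H : Type*} [NormedAddCommGroup H] [InnerProductSpace ℝ H]
    [CompleteSpace H]
    (B : H →L[ℝ] H)
    (hsa : ∀ x y : H, (inner ℝ (B x) y : ℝ) = (inner ℝ x (B y) : ℝ))
    (hpos : ∀ x : H, 0 ≤ (inner ℝ (B x) x : ℝ))
    (f : ℝ → H) (hf : StronglyMeasurable f)
    (hloc : LocallyIntegrable (fun t : ℝ => ‖f t‖ ^ 2) volume)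
    (h s : ℝ) (hh : 0 < h) (hs : 0 < s) :
    (1 / 2 : ℝ) * (∫ t in (s - h)..s, (inner ℝ (B (f t)) (f t) : ℝ)) -
        (1 / 2 : ℝ) * (∫ t in (-h)..(0 : ℝ), (inner ℝ (B (f t)) (f t) : ℝ)) ≤
      ∫ t in (0 : ℝ)..s, (inner ℝ (B (f t)) (f t - f (t - h)) : ℝ) :=
  stmt13_general B hsa hpos f hf hloc h s hs
end
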